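/- For every k ∈ {0,1,…,n} there exists a symplectic matrix H_k ∈ Sp(2n,R) such that the rank of 𝔛(H_k) equals 2k. Concretely, the map (x',x'',ξ',ξ'') ↦ (x',−ξ'',ξ',x'') (with x',ξ' ∈ R^k, x'',ξ'' ∈ R^{n−k}) is symplectic and its image under 𝔛 has rank 2k. -/

import Mathlib

/-!
For a symmetric idempotent `P`, the block conditions for `fromBlocks P (P - 1) (1 - P) P` to be
symplectic reduce to `P² = P`, and `J H + Hᵀ J = diag(2P, 2P) J`. Since `J` is invertible, the rank
is `2 rank P`, which is `2k` for the coordinate projection onto the first `k` coordinates.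
-/

open Matrix

namespace Matrix

section CommRing

variable {l R : Type*} [Fintype l] [DecidableEq l] [CommRing R]

theorem J_mul_add_transpose_mul_J_fromBlocks (A B C D : Matrix l l R) :
    J l R * fromBlocks A B C D + (fromBlocks A B C D)ᵀ * J l R =
      fromBlocks (Cᵀ - C) (-(Aᵀ + D)) (A + Dᵀ) (B - Bᵀ) := by
  simp only [J, fromBlocks_transpose, fromBlocks_multiply, fromBlocks_add]
  congr 1 <;> noncomm_ring

variable {P : Matrix l l R}

theorem fromBlocks_mem_symplecticGroup_of_isIdempotentElem (hPt : Pᵀ = P)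
    (hP : IsIdempotentElem P) : fromBlocks P (P - 1) (1 - P) P ∈ symplecticGroup l R := by
  refine SymplecticGroup.fromBlocks_mem_iff.2 ⟨?_, ?_, ?_⟩ <;>
    simp only [hPt, transpose_sub, transpose_one] <;> noncomm_ring [hP.eq]

theorem J_mul_add_transpose_mul_J_fromBlocks_of_transpose_eq (hPt : Pᵀ = P) :
    J l R * fromBlocks P (P - 1) (1 - P) P + (fromBlocks P (P - 1) (1 - P) P)ᵀ * J l R =
      fromBlocks (P + P) 0 0 (P + P) * J l R := by
  rw [J_mul_add_transpose_mul_J_fromBlocks, J, fromBlocks_multiply]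
  simp only [hPt, transpose_sub, transpose_one]
  congr 1 <;> noncomm_ring

end CommRing

theorem rank_fromBlocks_diagonal_mul_J {l K : Type*} [Fintype l] [DecidableEq l] [Field K]
    [DecidableEq K] (d : l → K) :
    (fromBlocks (diagonal d) 0 0 (diagonal d) * J l K).rank = 2 * Fintype.card {i // d i ≠ 0} := by
  rw [rank_mul_eq_left_of_isUnit_det _ _ (isUnit_det_J l K), fromBlocks_diagonal, rank_diagonal,
    Fintype.card_congr (Equiv.subtypeSum (p := fun i => Sum.elim d d i ≠ 0)), Fintype.card_sum,
    two_mul]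
  rfl

end Matrix

/-- For each `k ≤ n` there is a symplectic matrix whose image under
`𝔛(H) = J H + Hᵀ J` has rank `2k`; concretely, the matrix of
`(x',x'',ξ',ξ'') ↦ (x',−ξ'',ξ',x'')`, i.e. `fromBlocks P (P−1) (1−P) P`
where `P` projects onto the first `k` coordinates, works. -/
theorem exists_symplectic_rank_X (n k : ℕ) (hk : k ≤ n)
    (J : Matrix (Fin n ⊕ Fin n) (Fin n ⊕ Fin n) ℝ)
    (hJ : J = Matrix.fromBlocks 0 (-1) 1 0)
    (P : Matrix (Fin n) (Fin n) ℝ)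
    (hP : P = Matrix.of fun (i j : Fin n) => if i = j ∧ (i : ℕ) < k then (1 : ℝ) else 0)
    (Hk : Matrix (Fin n ⊕ Fin n) (Fin n ⊕ Fin n) ℝ)
    (hHk : Hk = Matrix.fromBlocks P (P - 1) (1 - P) P) :
    (Hkᵀ * J * Hk = J ∧ (J * Hk + Hkᵀ * J).rank = 2 * k) ∧
      ∃ H : Matrix (Fin n ⊕ Fin n) (Fin n ⊕ Fin n) ℝ,
        Hᵀ * J * H = J ∧ (J * H + Hᵀ * J).rank = 2 * k := by
  set d : Fin n → ℝ := fun i => if (i : ℕ) < k then 1 else 0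
  have hPd : P = diagonal d := by
    subst hP; ext i j; by_cases h : i = j <;> simp [h, d]
  have hJ' : J = Matrix.J (Fin n) ℝ := hJ
  have hsymp : Hkᵀ * J * Hk = J := by
    have hidem : IsIdempotentElem P := by
      rw [hPd, IsIdempotentElem, diagonal_mul_diagonal]
      congr 1; funext i; by_cases h : (i : ℕ) < k <;> simp [d, h]
    rw [hJ', hHk]
    exact SymplecticGroup.mem_iff'.1
      (fromBlocks_mem_symplecticGroup_of_isIdempotentElem (hPd ▸ diagonal_transpose d) hidem)
  have hcard : Fintype.card {i // d i + d i ≠ 0} = k := by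
    rw [Fintype.card_subtype, ← min_eq_right hk, ← Fin.card_filter_val_lt]
    congr 1; ext i; by_cases h : (i : ℕ) < k <;> simp [d, h]
  have hrank : (J * Hk + Hkᵀ * J).rank = 2 * k := by
    rw [hJ', hHk, J_mul_add_transpose_mul_J_fromBlocks_of_transpose_eq (hPd ▸ diagonal_transpose d),
      hPd, diagonal_add, rank_fromBlocks_diagonal_mul_J, hcard]
  exact ⟨⟨hsymp, hrank⟩, Hk, hsymp, hrank⟩
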